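/- (Gaschütz) Let G be a profinite group topologically generated by d elements. Suppose M is a closed normal subgroup of G and g_1, …, g_k are k ≥ d elements of G such that the closure of the subgroup generated by g_1, …, g_k together with M is all of G. Then there exist elements g_i' ∈ g_iM (for i = 1, …, k) such that the closure of the subgroup generated by g_1', …, g_k' equals G. -/

import Mathlib

/-!
For a finite group `G` with normal subgroup `N`, the number of `k`-tuples that lift the image of
`t` in `(G/N)^k` and generate a subgroup `K` does not depend on `t`, as long as `t` lies in `K`
and generates `K` modulo `N`. Indeed, the lifts of `t` inside `K` form a coset of `(N ⊓ K)^k`,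
so their number is independent of `t`; they are partitioned by the subgroup `H ≤ K` they
generate; and for `H < K` the lifts generating `H` are counted equally for `t` and `s` by
induction, after moving `t` into `H`, which is possible exactly when `K ≤ H ⊔ N` (otherwise
there are none). As `G` is itself `k`-generated, the number of generating lifts is positive.

For profinite `G`, the lifts of `g` that generate `G` modulo an open normal subgroup `U` form a
closed set, since this condition only depends on the cosets modulo `U`. These sets are nonempty
by the finite case applied to `G/U`, and decrease as `U` shrinks, so by compactness they have a
common point, which generates a dense subgroup.
-/

open Set

namespace Gaschutz

section Lifts

open Subgroup

variable {G : Type*} [Group G] {k : ℕ}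

def lifts (N : Subgroup G) (t : Fin k → G) : Set (Fin k → G) :=
  {u | ∀ i, (t i)⁻¹ * u i ∈ N}

variable {N H K : Subgroup G} {t u : Fin k → G}

lemma self_mem_lifts (N : Subgroup G) (t : Fin k → G) : t ∈ lifts N t :=
  fun i => by simp [one_mem]

lemma mem_lifts_iff_mk_eq : u ∈ lifts N t ↔ ∀ i, (t i : G ⧸ N) = u i := by
  simp only [lifts, mem_ofPred_eq, QuotientGroup.eq]

lemma lifts_eq_of_mem (hu : u ∈ lifts N t) : lifts N u = lifts N t := by
  rw [mem_lifts_iff_mk_eq] at hu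
  ext v
  simp only [mem_lifts_iff_mk_eq, hu]

lemma mem_lifts_comm : u ∈ lifts N t ↔ t ∈ lifts N u :=
  ⟨fun hu => lifts_eq_of_mem hu ▸ self_mem_lifts N t,
    fun ht => lifts_eq_of_mem ht ▸ self_mem_lifts N u⟩

lemma ncard_lifts (N : Subgroup G) (t s : Fin k → G) :
    (lifts N t).ncard = (lifts N s).ncard := by
  have lifts_eq_image : ∀ t : Fin k → G, lifts N t = (t * ·) '' lifts N 1 := by
    intro t
    rw [image_mul_left]
    ext u
    simp [lifts]
  rw [lifts_eq_image t, lifts_eq_image s, ncard_image_of_injective _ (mul_right_injective t),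
    ncard_image_of_injective _ (mul_right_injective s)]

lemma closure_range_sup_le_of_mem_lifts (hu : u ∈ lifts N t) :
    closure (range t) ⊔ N ≤ closure (range u) ⊔ N := by
  refine sup_le ((closure_le _).2 ?_) le_sup_right
  rintro _ ⟨i, rfl⟩
  have : t i = u i * ((t i)⁻¹ * u i)⁻¹ := by group
  rw [this]
  exact mul_mem (mem_sup_left (subset_closure ⟨i, rfl⟩)) (mem_sup_right (inv_mem (hu i)))

lemma closure_range_sup_eq_of_mem_lifts (hu : u ∈ lifts N t) :
    closure (range u) ⊔ N = closure (range t) ⊔ N :=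
  le_antisymm (closure_range_sup_le_of_mem_lifts (mem_lifts_comm.1 hu))
    (closure_range_sup_le_of_mem_lifts hu)

lemma exists_mem_lifts_forall_mem [N.Normal] (ht : ∀ i, t i ∈ H ⊔ N) :
    ∃ u ∈ lifts N t, ∀ i, u i ∈ H := by
  choose u hu n hn htu using fun i => mem_sup_of_normal_right.1 (ht i)
  refine ⟨u, fun i => ?_, hu⟩
  rw [← htu i]
  simpa using inv_mem (hn i)

lemma lifts_eq_iInter (N : Subgroup G) (t : Fin k → G) :
    lifts N t = ⋂ i, (fun u : Fin k → G => (t i)⁻¹ * u i) ⁻¹' N := by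
  ext
  simp [lifts]

lemma lifts_map_subset {Q : Type*} [Group Q] (f : G →* Q) (M : Subgroup G) (g : Fin k → G) :
    lifts (M.map f) (f ∘ g) ⊆ (f ∘ ·) '' lifts M g := by
  intro u hu
  simp only [lifts, mem_ofPred_eq, mem_map] at hu
  choose m hm hfm using hu
  refine ⟨fun i => g i * m i, fun i => by simpa using hm i, funext fun i => ?_⟩
  simp [hfm]

def generatingLifts (N H : Subgroup G) (t : Fin k → G) : Set (Fin k → G) :=
  {u ∈ lifts N t | closure (range u) = H}

lemma generatingLifts_eq_of_mem_lifts (hu : u ∈ lifts N t) :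
    generatingLifts N H u = generatingLifts N H t := by
  simp only [generatingLifts, lifts_eq_of_mem hu]

lemma generatingLifts_eq_empty (htK : K ≤ closure (range t) ⊔ N) (hHK : ¬K ≤ H ⊔ N) :
    generatingLifts N H t = ∅ :=
  eq_empty_of_forall_notMem fun _ hu =>
    hHK (hu.2 ▸ (closure_range_sup_eq_of_mem_lifts hu.1).symm ▸ htK)

lemma lifts_inf_eq_biUnion (ht : ∀ i, t i ∈ K) :
    lifts (N ⊓ K) t = ⋃ H ∈ Iic K, generatingLifts N H t := by
  ext u
  simp only [mem_iUnion₂, mem_Iic]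
  constructor
  · intro hu
    refine ⟨closure (range u), (closure_le _).2 ?_, fun i => (hu i).1, rfl⟩
    rintro _ ⟨i, rfl⟩
    simpa [mul_mem_cancel_left (inv_mem (ht i))] using (hu i).2
  · rintro ⟨H, hHK, hu, rfl⟩ i
    exact mem_inf.2 ⟨hu i, mul_mem (inv_mem (ht i)) (hHK (subset_closure ⟨i, rfl⟩))⟩

lemma ncard_lifts_inf_eq_add [Finite G] (ht : ∀ i, t i ∈ K) :
    (lifts (N ⊓ K) t).ncard =
      (generatingLifts N K t).ncard + ∑ᶠ H ∈ Iio K, (generatingLifts N H t).ncard := by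
  have hdisjoint : (Iic K).PairwiseDisjoint (generatingLifts N · t) :=
    fun H₁ _ H₂ _ hne => disjoint_left.2 fun _ hu₁ hu₂ => hne (hu₁.2.symm.trans hu₂.2)
  rw [lifts_inf_eq_biUnion ht, (toFinite _).ncard_biUnion (fun _ _ => toFinite _) hdisjoint,
    ← Iio_insert, finsum_mem_insert _ self_notMem_Iio (toFinite _)]

theorem ncard_generatingLifts_eq [Finite G] (N : Subgroup G) [N.Normal] (K : Subgroup G)
    {t s : Fin k → G} (ht : ∀ i, t i ∈ K) (hs : ∀ i, s i ∈ K)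
    (htK : K ≤ closure (range t) ⊔ N) (hsK : K ≤ closure (range s) ⊔ N) :
    (generatingLifts N K t).ncard = (generatingLifts N K s).ncard := by
  induction K using WellFoundedLT.induction generalizing t s with
  | ind K ih =>
  have hproper : ∀ H ∈ Iio K,
      (generatingLifts N H t).ncard = (generatingLifts N H s).ncard := by
    intro H hHK
    by_cases hKH : K ≤ H ⊔ N
    · obtain ⟨t', ht', ht'H⟩ := exists_mem_lifts_forall_mem fun i => hKH (ht i)
      obtain ⟨s', hs', hs'H⟩ := exists_mem_lifts_forall_mem fun i => hKH (hs i)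
      rw [← generatingLifts_eq_of_mem_lifts ht', ← generatingLifts_eq_of_mem_lifts hs']
      exact ih H hHK ht'H hs'H
        ((le_of_lt hHK).trans (htK.trans (closure_range_sup_eq_of_mem_lifts ht').ge))
        ((le_of_lt hHK).trans (hsK.trans (closure_range_sup_eq_of_mem_lifts hs').ge))
    · rw [generatingLifts_eq_empty htK hKH, generatingLifts_eq_empty hsK hKH]
  have htotal := ncard_lifts (N ⊓ K) t s
  rw [ncard_lifts_inf_eq_add ht, ncard_lifts_inf_eq_add hs, finsum_mem_congr rfl hproper] at htotal
  exact Nat.add_right_cancel htotal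

theorem exists_mem_lifts_closure_range_eq_top [Finite G] (N : Subgroup G) [N.Normal]
    {s t : Fin k → G} (hs : closure (range s) = ⊤) (ht : closure (range t) ⊔ N = ⊤) :
    ∃ u ∈ lifts N t, closure (range u) = ⊤ := by
  have hcount := ncard_generatingLifts_eq N ⊤ (fun i => mem_top (s i)) (fun i => mem_top (t i))
    (hs ▸ le_sup_left) ht.ge
  have hs_mem : s ∈ generatingLifts N ⊤ s := ⟨self_mem_lifts N s, hs⟩
  exact nonempty_of_ncard_ne_zero (hcount ▸ (ncard_pos (toFinite _)).2 ⟨s, hs_mem⟩).ne'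

lemma map_closure_range {Q : Type*} [Group Q] (f : G →* Q) (u : Fin k → G) :
    (closure (range u)).map f = closure (range (f ∘ u)) := by
  rw [MonoidHom.map_closure, range_comp]

lemma sup_eq_top_iff_map_mk'_eq_top (N : Subgroup G) [N.Normal] (H : Subgroup G) :
    H ⊔ N = ⊤ ↔ H.map (QuotientGroup.mk' N) = ⊤ := by
  rw [← (comap_injective (QuotientGroup.mk'_surjective N)).eq_iff, comap_map_eq,
    QuotientGroup.ker_mk', comap_top]

theorem exists_mem_lifts_sup_eq_top (U M : Subgroup G) [U.Normal] [U.FiniteIndex] [hM : M.Normal]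
    {s g : Fin k → G} (hs : closure (range s) ⊔ U = ⊤)
    (hg : closure (range g) ⊔ M ⊔ U = ⊤) :
    ∃ v ∈ lifts M g, closure (range v) ⊔ U = ⊤ := by
  set π := QuotientGroup.mk' U
  have : (M.map π).Normal := hM.map π (QuotientGroup.mk'_surjective U)
  rw [sup_eq_top_iff_map_mk'_eq_top, map_closure_range] at hs
  rw [sup_eq_top_iff_map_mk'_eq_top, Subgroup.map_sup, map_closure_range] at hg
  obtain ⟨u, hu, hu_top⟩ := exists_mem_lifts_closure_range_eq_top (M.map π) hs hg
  obtain ⟨v, hv, rfl⟩ := lifts_map_subset π M g hu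
  exact ⟨v, hv, by rwa [sup_eq_top_iff_map_mk'_eq_top, map_closure_range]⟩

end Lifts

section Topological

variable {G : Type*} [Group G] [TopologicalSpace G] [IsTopologicalGroup G] {k : ℕ}

lemma isClosed_lifts {N : Subgroup G} (hN : IsClosed (N : Set G)) (t : Fin k → G) :
    IsClosed (lifts N t) := by
  rw [lifts_eq_iInter]
  exact isClosed_iInter fun i => hN.preimage (by fun_prop)

lemma isOpen_lifts {N : Subgroup G} (hN : IsOpen (N : Set G)) (t : Fin k → G) :
    IsOpen (lifts N t) := by
  rw [lifts_eq_iInter]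
  exact isOpen_iInter_of_finite fun i => hN.preimage (by fun_prop)

lemma isLocallyConstant_closure_range_sup {U : Subgroup G} (hU : IsOpen (U : Set G)) :
    IsLocallyConstant fun v : Fin k → G => Subgroup.closure (range v) ⊔ U :=
  (IsLocallyConstant.iff_eventually_eq _).2 fun t =>
    Filter.eventually_of_mem ((isOpen_lifts hU t).mem_nhds (self_mem_lifts U t))
      fun _ hu => closure_range_sup_eq_of_mem_lifts hu

lemma sup_eq_top_of_dense {H : Subgroup G} (hH : Dense (H : Set G)) {U : Subgroup G}
    (hU : IsOpen (U : Set G)) : H ⊔ U = ⊤ := by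
  refine eq_top_iff.2 fun g _ => ?_
  obtain ⟨h, hH, hgh⟩ := hH.exists_mem_open
    (hU.preimage (by fun_prop : Continuous fun x : G => x⁻¹ * g)) ⟨g, by simp [one_mem]⟩
  simpa using Subgroup.mul_mem_sup hH hgh

lemma dense_of_forall_sup_eq_top [CompactSpace G] [TotallyDisconnectedSpace G] {H : Subgroup G}
    (h : ∀ U : OpenNormalSubgroup G, H ⊔ U = ⊤) : Dense (H : Set G) := by
  refine dense_iff_inter_open.2 fun W hW ⟨g, hg⟩ => ?_
  obtain ⟨U, hU⟩ := ProfiniteGrp.exist_openNormalSubgroup_sub_open_nhds_of_one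
    (hW.preimage (continuous_const_mul g)) (by simpa)
  have hg_sup : g ∈ H ⊔ U := h U ▸ Subgroup.mem_top g
  obtain ⟨h', hh', u, hu, rfl⟩ := Subgroup.mem_sup_of_normal_right.1 hg_sup
  exact ⟨h', by simpa using hU (inv_mem hu), hh'⟩

instance : Nonempty (OpenNormalSubgroup G) :=
  ⟨{ toOpenSubgroup := ⊤, isNormal' := inferInstanceAs (⊤ : Subgroup G).Normal }⟩

theorem exists_mem_lifts_dense [CompactSpace G] [TotallyDisconnectedSpace G] {M : Subgroup G}
    [M.Normal] (hM : IsClosed (M : Set G)) {s g : Fin k → G}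
    (hs : Dense (Subgroup.closure (range s) : Set G))
    (hg : Dense ((Subgroup.closure (range g) ⊔ M : Subgroup G) : Set G)) :
    ∃ v ∈ lifts M g, Dense (Subgroup.closure (range v) : Set G) := by
  let C : OpenNormalSubgroup G → Set (Fin k → G) :=
    fun U => lifts M g ∩ {v | Subgroup.closure (range v) ⊔ U = ⊤}
  have hC_closed : ∀ U, IsClosed (C U) := fun U =>
    (isClosed_lifts hM g).inter ((isLocallyConstant_closure_range_sup U.isOpen).isClosed_fiber ⊤)
  have hC_mono : Monotone C := fun V U hVU => by
    refine inter_subset_inter_right _ fun v (hv : _ = ⊤) => top_le_iff.1 ?_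
    rw [← hv]
    exact sup_le_sup_left (show (V : Subgroup G) ≤ U from hVU) _
  have hC_nonempty : ∀ U, (C U).Nonempty := fun U => by
    have : U.toSubgroup.FiniteIndex := Subgroup.finiteIndex_of_finite_quotient
    exact exists_mem_lifts_sup_eq_top U.toSubgroup M (sup_eq_top_of_dense hs U.isOpen)
      (sup_eq_top_of_dense hg U.isOpen)
  obtain ⟨v, hv⟩ := IsCompact.nonempty_iInter_of_directed_nonempty_isCompact_isClosed C
    hC_mono.directed_ge hC_nonempty (fun U => (hC_closed U).isCompact) hC_closed
  rw [mem_iInter] at hv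
  exact ⟨v, (hv (Classical.arbitrary _)).1, dense_of_forall_sup_eq_top fun U => (hv U).2⟩

end Topological

lemma exists_range_subset_range {α : Type*} [Nonempty α] {d k : ℕ} (hdk : d ≤ k)
    (s : Fin d → α) : ∃ S : Fin k → α, range s ⊆ range S :=
  ⟨Function.extend (Fin.castLE hdk) s fun _ => Classical.arbitrary α, fun _ ⟨j, hj⟩ =>
    ⟨Fin.castLE hdk j, by rw [(Fin.castLE_injective hdk).extend_apply, hj]⟩⟩

end Gaschutz

theorem gaschutz_lifting_generators_general
    (G : Type*) [Group G] [TopologicalSpace G] [IsTopologicalGroup G]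
    [CompactSpace G] [TotallyDisconnectedSpace G]
    (d : ℕ)
    (hfg : ∃ s : Fin d → G, Dense ((Subgroup.closure (Set.range s) : Subgroup G) : Set G))
    (M : Subgroup G) [M.Normal] (hMclosed : IsClosed (M : Set G))
    (k : ℕ) (hkd : d ≤ k) (g : Fin k → G)
    (hgen : Dense ((Subgroup.closure (Set.range g) ⊔ M : Subgroup G) : Set G)) :
    ∃ g' : Fin k → G, (∀ i, (g i)⁻¹ * g' i ∈ M) ∧
      Dense ((Subgroup.closure (Set.range g') : Subgroup G) : Set G) := by
  obtain ⟨s, hs⟩ := hfg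
  obtain ⟨S, hsS⟩ := Gaschutz.exists_range_subset_range hkd s
  exact Gaschutz.exists_mem_lifts_dense hMclosed (hs.mono (Subgroup.closure_mono hsS)) hgen

/-- (Gaschütz) Let `G` be a profinite group topologically generated by `d` elements,
`M` a closed normal subgroup, and `g₁, …, g_k` (`k ≥ d`) elements generating `G`
topologically together with `M`. Then the `gᵢ` can be modified within their cosets
`gᵢM` so as to topologically generate `G`. -/
theorem gaschutz_lifting_generators
    (G : Type*) [Group G] [TopologicalSpace G] [IsTopologicalGroup G]
    [CompactSpace G] [T2Space G] [TotallyDisconnectedSpace G]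
    (d : ℕ)
    (hfg : ∃ s : Fin d → G, Dense ((Subgroup.closure (Set.range s) : Subgroup G) : Set G))
    (M : Subgroup G) [M.Normal] (hMclosed : IsClosed (M : Set G))
    (k : ℕ) (hkd : d ≤ k) (g : Fin k → G)
    (hgen : Dense ((Subgroup.closure (Set.range g) ⊔ M : Subgroup G) : Set G)) :
    ∃ g' : Fin k → G, (∀ i, (g i)⁻¹ * g' i ∈ M) ∧
      Dense ((Subgroup.closure (Set.range g') : Subgroup G) : Set G) :=
  gaschutz_lifting_generators_general G d hfg M hMclosed k hkd g hgen
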